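/- Let Λ be a commutative unital ring and C a small category. Let K = colim_{n∈ℕ} K^{(n)} be a sequential colimit of unbounded chain complexes of presheaves of Λ-modules on C such that each K^{(n)} is projective cofibrant and bounded below, and each transition morphism K^{(n)} → K^{(n+1)} is a split monomorphism in every degree. Then K is projective cofibrant: 0 → K has the left lifting property with respect to every degreewise-epimorphic quasi-isomorphism. -/

import Mathlib

/-!
A lift against a trivial fibration `p` is built along the sequential colimit one stage at a
time, so it suffices that each transition `i : A ⟶ B` has the left lifting property against
`p`. Lift the bottom map from `B` through `p`; on `A` the error lands in `kernel p`, which is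
acyclic. Since `A` is cofibrant, every map from `A` to an acyclic complex `Z` is
null-homotopic (lift it through the contractible complex `idCone Z ↠ Z`), and a
null-homotopy extends along the degreewise split mono `i` using degreewise retractions.
-/

open CategoryTheory CategoryTheory.Limits ZeroObject

universe u

/-- The category of presheaves of `Λ`-modules on a small category `C`. -/
abbrev PSh (Λ : Type u) [CommRing Λ] (C : Type u) [SmallCategory C] :=
  Cᵒᵖ ⥤ ModuleCat.{u} Λ

variable (Λ : Type u) [CommRing Λ] (C : Type u) [SmallCategory C]

/-- A morphism of complexes is a trivial fibration if it is a degreewise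
epimorphism and a quasi-isomorphism. -/
def IsTrivialFibration {K K' : ChainComplex (PSh Λ C) ℤ} (f : K ⟶ K') : Prop :=
  (∀ n : ℤ, Epi (f.f n)) ∧ QuasiIso f

/-- A complex `K` is projective cofibrant if `0 ⟶ K` has the left lifting property
with respect to all trivial fibrations. -/
def IsProjectiveCofibrant (K : ChainComplex (PSh Λ C) ℤ) : Prop :=
  ∀ ⦃X Y : ChainComplex (PSh Λ C) ℤ⦄ (p : X ⟶ Y), IsTrivialFibration Λ C p →
    HasLiftingProperty (0 : (0 : ChainComplex (PSh Λ C) ℤ) ⟶ K) p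

/-- A presheaf `F` is projective if `Hom(F, -) : PSh(C,Λ) ⥤ Mod_Λ` is an exact functor,
i.e. preserves finite limits and finite colimits. -/
def IsProjectivePresheaf (F : PSh Λ C) : Prop :=
  Nonempty (PreservesFiniteLimits ((linearCoyoneda Λ (PSh Λ C)).obj (Opposite.op F))) ∧
  Nonempty (PreservesFiniteColimits ((linearCoyoneda Λ (PSh Λ C)).obj (Opposite.op F)))


section

variable {V ι : Type*} [Category V] {c : ComplexShape ι}

section Preadditive

variable [Preadditive V]

lemma Homotopy.eq_nullHomotopicMap {K L : HomologicalComplex V c} {e : K ⟶ L}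
    (H : Homotopy e 0) : e = Homotopy.nullHomotopicMap H.hom := by
  ext i
  simpa [Homotopy.nullHomotopicMap] using H.comm i

lemma Homotopy.exists_comp_eq_of_isSplitMono_f {A B Z : HomologicalComplex V c} (i : A ⟶ B)
    [∀ n, IsSplitMono (i.f n)] {e : A ⟶ Z} (H : Homotopy e 0) :
    ∃ e' : B ⟶ Z, i ≫ e' = e :=
  ⟨Homotopy.nullHomotopicMap fun n m => retraction (i.f n) ≫ H.hom n m, by
    simp [Homotopy.comp_nullHomotopicMap, ← H.eq_nullHomotopicMap]⟩

lemma HomologicalComplex.acyclic_of_homotopy_id_zero [CategoryWithHomology V]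
    {K : HomologicalComplex V c} (H : Homotopy (𝟙 K) 0) : K.Acyclic := fun i => by
  rw [exactAt_iff_isZero_homology, IsZero.iff_id_eq_zero, ← homologyMap_id, H.homologyMap_eq,
    homologyMap_zero]

lemma HomologicalComplex.hasLiftingProperty_of_isSplitMono_f [HasZeroObject V]
    {A B X Y : HomologicalComplex V c} (i : A ⟶ B) [∀ n, IsSplitMono (i.f n)]
    (p : X ⟶ Y) [HasKernel p] (hA : ∀ e : A ⟶ kernel p, Nonempty (Homotopy e 0))
    [HasLiftingProperty (0 : 0 ⟶ B) p] : HasLiftingProperty i p where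
  sq_hasLift {g f} sq := by
    have sq₀ : CommSq (0 : 0 ⟶ X) 0 p f := ⟨by simp⟩
    let e : A ⟶ kernel p := kernel.lift p (g - i ≫ sq₀.lift) (by simp [sq.w])
    obtain ⟨H⟩ := hA e
    obtain ⟨e', he'⟩ := H.exists_comp_eq_of_isSplitMono_f i
    exact ⟨⟨{ l := sq₀.lift + e' ≫ kernel.ι p
              fac_left := by simp [reassoc_of% he', e] }⟩⟩

end Preadditive

lemma HomologicalComplex.acyclic_kernel [Abelian V] {X Y : HomologicalComplex V c} (p : X ⟶ Y)
    [∀ i, Epi (p.f i)] [QuasiIso p] : (kernel p).Acyclic :=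
  (ShortComplex.ShortExact.mk' (ShortComplex.exact_of_f_is_kernel
    (ShortComplex.mk (kernel.ι p) p (kernel.condition p)) (kernelIsKernel p)) inferInstance
    (epi_of_epi_f p inferInstance)).acyclic_X₁ ‹_›

end

namespace ChainComplex

variable {V : Type*} [Category V]

noncomputable section

section Preadditive

variable [Preadditive V] [HasBinaryBiproducts V]

/-- The mapping cone of `𝟙 Z`, shifted so that it maps onto `Z`: in degree `n` it is
`Z.X n ⊞ Z.X (n + 1)` with `d (x, z) = (d x, x - d z)`. -/
def idCone (Z : ChainComplex V ℤ) : ChainComplex V ℤ :=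
  of (fun n => Z.X n ⊞ Z.X (n + 1))
    (fun n => biprod.desc (biprod.lift (Z.d (n + 1) n) (𝟙 _))
      (biprod.lift 0 (-Z.d (n + 1 + 1) (n + 1))))
    (fun n => by ext <;> simp)

namespace idCone

variable (Z : ChainComplex V ℤ)

def π : idCone Z ⟶ Z where
  f _ := biprod.fst
  comm' i j (hij : j + 1 = i) := by
    subst hij
    dsimp [idCone]
    ext <;> simp [of_d]

instance (i : ℤ) : IsSplitEpi ((π Z).f i) := ⟨⟨⟨biprod.inl, biprod.inl_fst⟩⟩⟩

def homotopyIdZero : Homotopy (𝟙 (idCone Z)) 0 :=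
  (Homotopy.ofEq (by
    ext n
    obtain ⟨m, rfl⟩ : ∃ m, n = m + 1 := ⟨n - 1, by omega⟩
    erw [Homotopy.nullHomotopicMap'_f (c := ComplexShape.down ℤ) (k₂ := m + 1 + 1) (k₀ := m)
      rfl rfl]
    dsimp [idCone]
    simp only [of_d]
    ext <;> erw [Preadditive.comp_add, Preadditive.add_comp] <;> simp)).trans
  (Homotopy.nullHomotopy' fun i j (hij : i + 1 = j) =>
    biprod.snd ≫ (Z.XIsoOfEq hij).hom ≫ biprod.inl)

lemma nonempty_homotopy_zero_of_hasLiftingProperty [HasZeroObject V] {A : ChainComplex V ℤ}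
    (e : A ⟶ Z) [HasLiftingProperty (0 : 0 ⟶ A) (π Z)] : Nonempty (Homotopy e 0) := by
  have sq : CommSq (0 : 0 ⟶ idCone Z) 0 (π Z) e := ⟨by simp⟩
  refine ⟨(Homotopy.ofEq ?_).trans
    (((homotopyIdZero Z).compRight (π Z)).compLeft sq.lift |>.trans (Homotopy.ofEq ?_))⟩ <;>
    simp

lemma quasiIso_π [CategoryWithHomology V] {Z : ChainComplex V ℤ} (hZ : Z.Acyclic) :
    QuasiIso (π Z) :=
  ⟨fun i => (quasiIsoAt_iff_exactAt _ i
    (HomologicalComplex.acyclic_of_homotopy_id_zero (homotopyIdZero Z) i)).2 (hZ i)⟩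

end idCone

end Preadditive

end

end ChainComplex

section

variable {Λ C}

open ChainComplex

lemma IsProjectiveCofibrant.nonempty_homotopy_zero {A Z : ChainComplex (PSh Λ C) ℤ}
    (hA : IsProjectiveCofibrant Λ C A) (hZ : Z.Acyclic) (e : A ⟶ Z) :
    Nonempty (Homotopy e 0) :=
  have := hA (idCone.π Z) ⟨fun _ => inferInstance, idCone.quasiIso_π hZ⟩
  idCone.nonempty_homotopy_zero_of_hasLiftingProperty Z e

lemma IsProjectiveCofibrant.hasLiftingProperty_of_isSplitMono_f
    {A B X Y : ChainComplex (PSh Λ C) ℤ} (hA : IsProjectiveCofibrant Λ C A)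
    (hB : IsProjectiveCofibrant Λ C B) (i : A ⟶ B) [∀ n, IsSplitMono (i.f n)] {p : X ⟶ Y}
    (hp : IsTrivialFibration Λ C p) : HasLiftingProperty i p :=
  have := hp.1
  have := hp.2
  have := hB p hp
  HomologicalComplex.hasLiftingProperty_of_isSplitMono_f i p fun e =>
    hA.nonempty_homotopy_zero (HomologicalComplex.acyclic_kernel p) e

end

theorem isProjectiveCofibrant_of_sequential_colimit
    (D : ℕ ⥤ ChainComplex (PSh Λ C) ℤ)
    (hcof : ∀ n : ℕ, IsProjectiveCofibrant Λ C (D.obj n))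
    (hsplit : ∀ (n : ℕ) (i : ℤ), IsSplitMono ((D.map (homOfLE (Nat.le_succ n))).f i))
    (K : ChainComplex (PSh Λ C) ℤ) (cc : Limits.Cocone D) (hcc : Limits.IsColimit cc)
    (hK : K = cc.pt) :
    IsProjectiveCofibrant Λ C K := by
  subst hK
  intro X Y p hp
  have : HasLiftingProperty (0 : 0 ⟶ D.obj 0) p := hcof 0 p hp
  have : HasLiftingProperty (cc.ι.app ⊥) p :=
    HasLiftingProperty.transfiniteComposition.hasLiftingProperty_ι_app_bot hcc fun n _ =>
      have : ∀ i, IsSplitMono ((D.map (homOfLE (Order.le_succ n))).f i) := hsplit n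
      (hcof n).hasLiftingProperty_of_isSplitMono_f (hcof (n + 1))
        (D.map (homOfLE (Order.le_succ n))) hp
  rw [← zero_comp (f := cc.ι.app ⊥)]
  infer_instance
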